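/- arXiv:0812.1796 — 2 statements merged into one kernel-verified Lean document; each statement's English description precedes it below -/
import Mathlib

section
/- Let E be a normed linear space, U an arbitrary set, g : U → ℝ and h : U → E. Then there exists a continuous linear functional e* ∈ E* such that g(u) = ⟨e*, h(u)⟩ for all u ∈ U if and only if there exists γ > 0 such that for every n ∈ ℕ, all real numbers β₁,…,βₙ and all points u₁,…,uₙ ∈ U one has |∑_{i=1}^n βᵢ g(uᵢ)| ≤ γ ‖∑_{i=1}^n βᵢ h(uᵢ)‖_E. -/
/-!
Necessity is the bound `|e x| ≤ ‖e‖ ‖x‖`. For sufficiency, the inequality says that the formal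
combination `∑ βᵢ uᵢ ↦ ∑ βᵢ g(uᵢ)` vanishes whenever `∑ βᵢ h(uᵢ)` does, so it descends to a
linear functional on the span of `h(U)`, bounded by `γ`; Hahn–Banach extends it to all of `E`.
-/

open Finsupp

namespace LinearMap

variable {R M N P : Type*} [Ring R] [AddCommGroup M] [Module R M] [AddCommGroup N] [Module R N]
  [AddCommGroup P] [Module R P]

theorem exists_comp_rangeRestrict_eq_of_ker_le (T : M →ₗ[R] N) (φ : M →ₗ[R] P)
    (hker : ker T ≤ ker φ) : ∃ ψ : range T →ₗ[R] P, ψ ∘ₗ T.rangeRestrict = φ :=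
  ⟨(ker T).liftQ φ hker ∘ₗ T.quotKerEquivRange.symm.toLinearMap, by
    ext x
    have hmk : T.quotKerEquivRange ((ker T).mkQ x) = T.rangeRestrict x :=
      Subtype.ext (T.quotKerEquivRange_apply_mk x)
    simp [← hmk]⟩

end LinearMap

theorem exists_strongDual_comp_eq_of_norm_le {𝕜 E M : Type*} [RCLike 𝕜]
    [NormedAddCommGroup E] [NormedSpace 𝕜 E] [AddCommGroup M] [Module 𝕜 M]
    (T : M →ₗ[𝕜] E) (φ : M →ₗ[𝕜] 𝕜) (γ : ℝ) (hφ : ∀ x, ‖φ x‖ ≤ γ * ‖T x‖) :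
    ∃ e : StrongDual 𝕜 E, ∀ x, e (T x) = φ x := by
  have hker : LinearMap.ker T ≤ LinearMap.ker φ := fun x hx => by
    simpa [LinearMap.mem_ker.mp hx] using hφ x
  obtain ⟨ψ, hψ⟩ := T.exists_comp_rangeRestrict_eq_of_ker_le φ hker
  have hψ_bound : ∀ y, ‖ψ y‖ ≤ γ * ‖y‖ := by
    intro y
    obtain ⟨x, rfl⟩ := T.surjective_rangeRestrict y
    simpa [← hψ] using hφ x
  obtain ⟨e, he, -⟩ := exists_extension_norm_eq _ (ψ.mkContinuous γ hψ_bound)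
  refine ⟨e, fun x => ?_⟩
  simpa [← hψ] using he (T.rangeRestrict x)

theorem Finsupp.linearCombination_eq_sum_fin {R U M : Type*} [Semiring R] [AddCommMonoid M]
    [Module R M] (v : U → M) (l : U →₀ R) :
    linearCombination R v l =
      ∑ i, l (l.support.equivFin.symm i) • v (l.support.equivFin.symm i) := by
  rw [linearCombination_apply, Finsupp.sum, ← Finset.sum_coe_sort,
    ← l.support.equivFin.symm.sum_comp]

theorem Finsupp.norm_linearCombination_le_of_forall_fin {R U F E : Type*} [Semiring R]
    [SeminormedAddCommGroup F] [Module R F] [SeminormedAddCommGroup E] [Module R E]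
    {g : U → F} {h : U → E} {γ : ℝ}
    (H : ∀ (n : ℕ) (β : Fin n → R) (u : Fin n → U),
      ‖∑ i, β i • g (u i)‖ ≤ γ * ‖∑ i, β i • h (u i)‖) (l : U →₀ R) :
    ‖linearCombination R g l‖ ≤ γ * ‖linearCombination R h l‖ := by
  rw [linearCombination_eq_sum_fin, linearCombination_eq_sum_fin]
  exact H _ _ _

/-- The moment problem criterion (Lemma on moments): for a normed space `E`, an
arbitrary set `U`, and functions `g : U → ℝ`, `h : U → E`, there exists a continuous
linear functional `e* ∈ E*` with `g u = ⟨e*, h u⟩` for all `u ∈ U` if and only if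
there is `γ > 0` such that for every finite family of reals `β₁,…,βₙ` and points
`u₁,…,uₙ ∈ U` one has `|∑ βᵢ g(uᵢ)| ≤ γ ‖∑ βᵢ h(uᵢ)‖`. -/
theorem moment_problem_criterion {E : Type*} [NormedAddCommGroup E] [NormedSpace ℝ E]
    {U : Type*} (g : U → ℝ) (h : U → E) :
    (∃ e : E →L[ℝ] ℝ, ∀ u : U, g u = e (h u)) ↔
      (∃ γ : ℝ, 0 < γ ∧ ∀ (n : ℕ) (β : Fin n → ℝ) (u : Fin n → U),
        |∑ i, β i * g (u i)| ≤ γ * ‖∑ i, β i • h (u i)‖) := by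
  constructor
  · rintro ⟨e, he⟩
    refine ⟨‖e‖ + 1, by positivity, fun n β u => ?_⟩
    have hsum : ∑ i, β i * g (u i) = e (∑ i, β i • h (u i)) := by simp [he]
    rw [hsum]
    exact (e.le_opNorm _).trans (by gcongr; linarith)
  · rintro ⟨γ, -, H⟩
    obtain ⟨e, he⟩ := exists_strongDual_comp_eq_of_norm_le (linearCombination ℝ h)
      (linearCombination ℝ g) γ
      (norm_linearCombination_le_of_forall_fin (g := g) fun n β u => by simpa using H n β u)
    exact ⟨e, fun u => by simpa using (he (single u 1)).symm⟩
end

section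
/- Let ν be a measure on ℝ, let x₀ ≠ 0, and let (εₙ)_{n≥1} be a strictly decreasing sequence with εₙ ↓ 0 such that ν(B(x₀,εₙ) \ B(x₀,εₙ₊₁)) > 0 for all n ≥ 1 (so x₀ is a concentration point of ν). Define ψ : ℝ → ℝ by ψ(x) = min(|x|,1) for x in B(x₀,ε_{2k+1}) \ B(x₀,ε_{2k+2}) (k = 0,1,…), ψ(x) = −min(|x|,1) for x in B(x₀,ε_{2k}) \ B(x₀,ε_{2k+1}) (k = 1,2,…), and ψ(x) = min(|x|,1) otherwise. Let E be a normed space and let h : ℝ → E be continuous at x₀. Then there is no continuous linear functional e* ∈ E* such that ψ(x) = ⟨e*, h(x)⟩ for ν-almost every x ∈ ℝ. -/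
/-!
Suppose `ψ = e* ∘ h` almost everywhere. Every annulus around `x₀` has positive mass, so it
contains a point where the representation holds; picking such points in the odd annuli and in
the even annuli gives two sequences tending to `x₀`. Along the first, `e* ∘ h` equals
`min(|x|, 1)`, along the second `-min(|x|, 1)`, so continuity at `x₀` forces
`min(|x₀|, 1) = -min(|x₀|, 1)`, which is impossible for `x₀ ≠ 0`.
-/

open MeasureTheory Metric Set Filter

theorem ContinuousAt.eq_of_tendsto_of_forall_eq {X Y ι : Type*} [TopologicalSpace X]
    [TopologicalSpace Y] [T2Space Y] {f g : X → Y} {x₀ : X} {l : Filter ι} [l.NeBot]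
    {b : ι → X} (hf : ContinuousAt f x₀) (hg : ContinuousAt g x₀)
    (hb : Tendsto b l (nhds x₀)) (hfg : ∀ i, f (b i) = g (b i)) : f x₀ = g x₀ :=
  tendsto_nhds_unique (hf.tendsto.comp hb) ((hg.tendsto.comp hb).congr fun i => (hfg i).symm)

theorem exists_seq_tendsto_forall_mem_of_ae {X : Type*} [PseudoMetricSpace X]
    [MeasurableSpace X] {ν : Measure X} {p : X → Prop} (hp : ∀ᵐ x ∂ν, p x) {x₀ : X}
    {r : ℕ → ℝ} (hr : Tendsto r atTop (nhds 0)) {A : ℕ → Set X}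
    (hA : ∀ k, A k ⊆ closedBall x₀ (r k)) (hν : ∀ k, ν (A k) ≠ 0) :
    ∃ b : ℕ → X, Tendsto b atTop (nhds x₀) ∧ ∀ k, b k ∈ A k ∧ p (b k) := by
  choose b hbA hbp using fun k =>
    Measure.exists_mem_of_measure_ne_zero_of_ae (hν k) (ae_restrict_of_ae hp)
  refine ⟨b, ?_, fun k => ⟨hbA k, hbp k⟩⟩
  rw [tendsto_iff_dist_tendsto_zero]
  exact squeeze_zero (fun _ => dist_nonneg) (fun k => mem_closedBall.mp (hA k (hbA k))) hr

theorem no_representation_of_concentration_point_general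
    {E : Type*} [NormedAddCommGroup E] [NormedSpace ℝ E]
    (ν : Measure ℝ) (x₀ : ℝ) (hx₀ : x₀ ≠ 0)
    (ε : ℕ → ℝ) (hlim : Tendsto ε atTop (nhds 0))
    (hν : ∀ n : ℕ, 1 ≤ n → 0 < ν (closedBall x₀ (ε n) \ closedBall x₀ (ε (n + 1))))
    (ψ : ℝ → ℝ)
    (hψodd : ∀ k : ℕ,
      ∀ x ∈ closedBall x₀ (ε (2 * k + 1)) \ closedBall x₀ (ε (2 * k + 2)),
        ψ x = min |x| 1)
    (hψeven : ∀ k : ℕ, 1 ≤ k →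
      ∀ x ∈ closedBall x₀ (ε (2 * k)) \ closedBall x₀ (ε (2 * k + 1)),
        ψ x = -(min |x| 1))
    (h : ℝ → E) (hcont : ContinuousAt h x₀) :
    ¬ ∃ e : E →L[ℝ] ℝ, ∀ᵐ x ∂ν, ψ x = e (h x) := by
  rintro ⟨e, hae⟩
  have hφ : Continuous fun x : ℝ => min |x| 1 := continuous_abs.min continuous_const
  have heh : ContinuousAt (fun x => e (h x)) x₀ := e.continuous.continuousAt.comp hcont
  obtain ⟨b, hb, hbψ⟩ := exists_seq_tendsto_forall_mem_of_ae hae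
    (hlim.comp (tendsto_atTop_mono (fun k => (by omega : k ≤ 2 * k + 1)) tendsto_id))
    (fun _ => sdiff_subset) fun k => (hν (2 * k + 1) (by omega)).ne'
  obtain ⟨c, hc, hcψ⟩ := exists_seq_tendsto_forall_mem_of_ae hae
    (hlim.comp (tendsto_atTop_mono (fun k => (by omega : k ≤ 2 * (k + 1))) tendsto_id))
    (fun _ => sdiff_subset) fun k => (hν (2 * (k + 1)) (by omega)).ne'
  have hodd : e (h x₀) = min |x₀| 1 := heh.eq_of_tendsto_of_forall_eq hφ.continuousAt hb
    fun k => by rw [← (hbψ k).2, hψodd k _ (hbψ k).1]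
  have heven : e (h x₀) = -min |x₀| 1 :=
    heh.eq_of_tendsto_of_forall_eq (g := fun x => -min |x| 1) hφ.neg.continuousAt hc
    fun k => by rw [← (hcψ k).2, hψeven (k + 1) (by omega) _ (hcψ k).1]
  have hpos : 0 < min |x₀| 1 := lt_min (abs_pos.mpr hx₀) one_pos
  linarith

/-- The key nonrepresentability argument behind the concentration-point
incompleteness theorem: if `x₀ ≠ 0` is a concentration point of `ν` (witnessed by
the strictly decreasing sequence `εₙ ↓ 0` with `ν(B(x₀,εₙ) \ B(x₀,εₙ₊₁)) > 0`),
`ψ` is the alternating function equal to `min(|x|,1)` on the odd annuli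
`B(x₀,ε_{2k+1}) \ B(x₀,ε_{2k+2})`, to `-min(|x|,1)` on the even annuli
`B(x₀,ε_{2k}) \ B(x₀,ε_{2k+1})` (`k ≥ 1`), and to `min(|x|,1)` elsewhere, and
`h : ℝ → E` is continuous at `x₀`, then no continuous linear functional `e* ∈ E*`
satisfies `ψ(x) = ⟨e*, h(x)⟩` for `ν`-almost every `x`. -/
theorem no_representation_of_concentration_point
    {E : Type*} [NormedAddCommGroup E] [NormedSpace ℝ E]
    (ν : Measure ℝ) (x₀ : ℝ) (hx₀ : x₀ ≠ 0)
    (ε : ℕ → ℝ) (hanti : StrictAnti ε) (hlim : Tendsto ε atTop (nhds 0))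
    (hν : ∀ n : ℕ, 1 ≤ n → 0 < ν (closedBall x₀ (ε n) \ closedBall x₀ (ε (n + 1))))
    (ψ : ℝ → ℝ)
    (hψodd : ∀ k : ℕ,
      ∀ x ∈ closedBall x₀ (ε (2 * k + 1)) \ closedBall x₀ (ε (2 * k + 2)),
        ψ x = min |x| 1)
    (hψeven : ∀ k : ℕ, 1 ≤ k →
      ∀ x ∈ closedBall x₀ (ε (2 * k)) \ closedBall x₀ (ε (2 * k + 1)),
        ψ x = -(min |x| 1))
    (hψrest : ∀ x : ℝ,
      (∀ n : ℕ, 1 ≤ n → x ∉ closedBall x₀ (ε n) \ closedBall x₀ (ε (n + 1))) →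
        ψ x = min |x| 1)
    (h : ℝ → E) (hcont : ContinuousAt h x₀) :
    ¬ ∃ e : E →L[ℝ] ℝ, ∀ᵐ x ∂ν, ψ x = e (h x) :=
  no_representation_of_concentration_point_general ν x₀ hx₀ ε hlim hν ψ hψodd hψeven h hcont
end
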